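/- arXiv:1401.2675 — 2 statements merged into one kernel-verified Lean document; each statement's English description precedes it below -/
import Mathlib

section
/- Let u(z) = z(1 + Σ_{n≥1} u_n z^n) be a formal power series with compositional inverse U(t) = t(1 + Σ_{n≥1} U_n t^n), and define P_n(u) := Res( (U'(t)/U(t))² t^{-n+1}, t = 0 ) for n ≥ 1. Then P_n is a polynomial in u_1, …, u_n with integer coefficients, homogeneous of degree n when u_j is assigned degree j, and P_n = -2n·u_n + (terms involving only u_1, …, u_{n-1}). -/
open PowerSeries

noncomputable section

/-- Composition `f ∘ g` of formal power series (meaningful when `g` has zero constant term). -/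
def psComp (f g : PowerSeries ℂ) : PowerSeries ℂ :=
  PowerSeries.mk fun n => ∑ k ∈ Finset.range (n + 1),
    PowerSeries.coeff k f * PowerSeries.coeff n (g ^ k)

/-- Inclusion of power series into the Laurent series field `ℂ((t))`. -/
def toLS (f : PowerSeries ℂ) : LaurentSeries ℂ := HahnSeries.ofPowerSeries ℤ ℂ f

/-- The variable `t` of the Laurent series field. -/
def tLS : LaurentSeries ℂ := toLS PowerSeries.X

/-- The formal power series `u(z) = z(1 + Σ_{n≥1} c n · zⁿ)`. -/
def uSeries (c : ℕ → ℂ) : PowerSeries ℂ :=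
  PowerSeries.mk fun k => if k = 0 then 0 else if k = 1 then 1 else c (k - 1)

/-- `P_n(u) = Res( (U'(t)/U(t))² t^{-n+1}, t = 0 )`, where `U` is the compositional
inverse of `u`; the residue is the coefficient of `t⁻¹` in `ℂ((t))`. -/
def Pres (n : ℕ) (U : PowerSeries ℂ) : ℂ :=
  ((toLS (derivativeFun U) / toLS U) ^ 2 * tLS ^ (1 - (n : ℤ))).coeff (-1)

/-!
Write `U = t W` with `W(0) = 1`. Then `t U'/U = U'/W`, so `P_n` is the coefficient of `tⁿ` in
`(U'/W)²`, which only involves `W` modulo `t^(n+1)`, i.e. `U₁, …, Uₙ`. Comparing coefficients in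
`u(U(t)) = t` expresses each `U_m` recursively as an integer polynomial in `u₁, …, u_m`; running
this recursion over `ℤ[u₁, …, uₙ]` gives the polynomial. It is weighted homogeneous because every
step preserves the property that the coefficient of `t^j` has weight `j`. The coefficient
of `u_n` is found over the dual numbers: for `u = z + ε z^{n+1}` with `ε² = 0` the inverse is
`t - ε t^{n+1}` and `P_n = -2nε`, while `u_n` is the only monomial of weight `n` containing `u_n`.
-/

namespace PowerSeries

section

variable {R R' : Type*} [CommSemiring R] [CommSemiring R']

theorem coeff_coe_trunc_pow {d m : ℕ} (h : d < m) (f : R⟦X⟧) (k : ℕ) :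
    coeff d ((trunc m f : R⟦X⟧) ^ k) = coeff d (f ^ k) := by
  rw [← coeff_coe_trunc_of_lt h, trunc_trunc_pow, coeff_coe_trunc_of_lt h]

theorem X_pow_dvd_derivative {k : ℕ} {f : R⟦X⟧} (h : X ^ (k + 1) ∣ f) :
    X ^ k ∣ d⁄dX R f := by
  rw [X_pow_dvd_iff] at h ⊢
  intro m hm
  rw [coeff_derivative, h (m + 1) (by omega), zero_mul]

theorem map_derivative (f : R →+* R') (φ : R⟦X⟧) :
    map f (d⁄dX R φ) = d⁄dX R' (map f φ) := by
  ext n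
  simp [coeff_derivative]

end

section

variable {R R' : Type*} [CommRing R] [CommRing R']

theorem map_invOfUnit_one (f : R →+* R') {φ : R⟦X⟧} (h : constantCoeff φ = 1) :
    map f (invOfUnit φ 1) = invOfUnit (map f φ) 1 := by
  have h' : constantCoeff (map f φ) = ((1 : R'ˣ) : R') := by
    rw [← coeff_zero_eq_constantCoeff_apply, coeff_map, coeff_zero_eq_constantCoeff_apply, h,
      map_one, Units.val_one]
  refine (left_inv_eq_right_inv (invOfUnit_mul _ _ h') ?_).symm
  rw [← map_mul, mul_invOfUnit φ 1 (by simp [h]), map_one]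

theorem invOfUnit_one_sub_of_mul_self_eq_zero {e : R⟦X⟧} (he : e * e = 0)
    (h : constantCoeff e = 0) : invOfUnit (1 - e) 1 = 1 + e := by
  have h' : constantCoeff (1 - e) = ((1 : Rˣ) : R) := by simp [h]
  refine left_inv_eq_right_inv (invOfUnit_mul _ _ h') ?_
  linear_combination -he

/-- For `U = X * W` this is `t U'/U`. -/
def tLogDeriv (W : R⟦X⟧) : R⟦X⟧ := d⁄dX R (X * W) * invOfUnit W 1

theorem map_tLogDeriv (f : R →+* R') {W : R⟦X⟧} (hW : constantCoeff W = 1) :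
    map f (tLogDeriv W) = tLogDeriv (map f W) := by
  rw [tLogDeriv, tLogDeriv, map_mul, map_derivative, map_mul, map_X, map_invOfUnit_one f hW]

theorem X_pow_dvd_tLogDeriv_sub {k : ℕ} {W₁ W₂ : R⟦X⟧} (h₁ : constantCoeff W₁ = 1)
    (h₂ : constantCoeff W₂ = 1) (h : X ^ k ∣ W₁ - W₂) :
    X ^ k ∣ tLogDeriv W₁ - tLogDeriv W₂ := by
  set V₁ := invOfUnit W₁ 1
  set V₂ := invOfUnit W₂ 1
  have hV₁ : W₁ * V₁ = 1 := mul_invOfUnit W₁ 1 (by simp [h₁])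
  have hV₂ : W₂ * V₂ = 1 := mul_invOfUnit W₂ 1 (by simp [h₂])
  have hV : X ^ k ∣ V₁ - V₂ := by
    rw [show V₁ - V₂ = V₁ * V₂ * (W₂ - W₁) by linear_combination V₂ * hV₁ - V₁ * hV₂]
    exact dvd_mul_of_dvd_right (dvd_sub_comm.1 h) _
  have hD : X ^ k ∣ d⁄dX R (X * W₁) - d⁄dX R (X * W₂) := by
    rw [← map_sub, ← mul_sub]
    exact X_pow_dvd_derivative (by rw [pow_succ']; exact mul_dvd_mul_left X h)
  rw [tLogDeriv, tLogDeriv, show ∀ a b c d : R⟦X⟧, a * b - c * d = a * (b - d) + (a - c) * d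
    by intros; ring]
  exact dvd_add (dvd_mul_of_dvd_right hV _) (dvd_mul_of_dvd_left hD _)

theorem coeff_tLogDeriv_sq_eq_of_trunc_eq {n : ℕ} {W₁ W₂ : R⟦X⟧} (h₁ : constantCoeff W₁ = 1)
    (h₂ : constantCoeff W₂ = 1) (h : trunc (n + 1) W₁ = trunc (n + 1) W₂) :
    coeff n (tLogDeriv W₁ ^ 2) = coeff n (tLogDeriv W₂ ^ 2) := by
  have hW : X ^ (n + 1) ∣ W₁ - W₂ := by
    rw [X_pow_dvd_iff]
    intro m hm
    rw [map_sub, ← coeff_coe_trunc_of_lt hm, h, coeff_coe_trunc_of_lt hm, sub_self]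
  have hG := X_pow_dvd_tLogDeriv_sub h₁ h₂ hW
  have hG2 : X ^ (n + 1) ∣ tLogDeriv W₁ ^ 2 - tLogDeriv W₂ ^ 2 := by
    rw [sq_sub_sq]
    exact dvd_mul_of_dvd_right hG _
  rw [← sub_eq_zero, ← map_sub]
  exact X_pow_dvd_iff.1 hG2 n (lt_add_one n)

/-- `reversion c m = 1 + U₁ t + ⋯ + U_m t^m`, where `t (1 + ∑ U_k t^k)` is the compositional
inverse of `z (1 + ∑ c_k z^k)`; the new coefficient `U_{m+1}` is read off from the coefficient of
`t^(m+2)` in `u(U(t)) = t`. -/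
def reversion (c : ℕ → R) : ℕ → R⟦X⟧
  | 0 => 1
  | m + 1 => reversion c m + C
      (-∑ j ∈ Finset.range (m + 1), c (j + 1) * coeff (m - j) (reversion c m ^ (j + 2))) *
      X ^ (m + 1)

theorem constantCoeff_reversion (c : ℕ → R) (m : ℕ) : constantCoeff (reversion c m) = 1 := by
  induction m with
  | zero => simp [reversion]
  | succ m ih => simp [reversion, ih]

theorem map_reversion (f : R →+* R') (c : ℕ → R) (m : ℕ) :
    map f (reversion c m) = reversion (f ∘ c) m := by
  induction m with
  | zero => simp [reversion]
  | succ m ih =>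
    simp only [reversion, map_add, map_mul, PowerSeries.map_C, map_neg, map_sum, map_pow, map_X,
      ← coeff_map f, ih, Function.comp_apply]

theorem reversion_congr {c c' : ℕ → R} {m : ℕ} (h : ∀ k, 0 < k → k ≤ m → c k = c' k) :
    reversion c m = reversion c' m := by
  induction m with
  | zero => rfl
  | succ m ih =>
    have hsum : ∀ j ∈ Finset.range (m + 1), c (j + 1) * coeff (m - j) (reversion c' m ^ (j + 2))
        = c' (j + 1) * coeff (m - j) (reversion c' m ^ (j + 2)) := fun j hj => by
      rw [h (j + 1) j.succ_pos (Finset.mem_range.1 hj)]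
    rw [reversion, reversion, ih fun k hk hkm => h k hk (by omega), Finset.sum_congr rfl hsum]

theorem reversion_ite_of_mul_self_eq_zero {a : R} (ha : a * a = 0) {n : ℕ} (hn : n ≠ 0)
    (m : ℕ) : reversion (fun k => if k = n then a else 0) m =
      1 - if n ≤ m then C a * X ^ n else 0 := by
  set c : ℕ → R := fun k => if k = n then a else 0
  induction m with
  | zero => simp [reversion, hn]
  | succ m ih =>
    -- `c k` is `0` or `a`, and `a * a = 0` kills the `C a * X ^ n` part of `reversion c m`
    have habs : ∀ k p, C (c k) * reversion c m ^ p = C (c k) := by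
      intro k p
      induction p with
      | zero => rw [pow_zero, mul_one]
      | succ p ihp =>
        rw [pow_succ, ← mul_assoc, ihp, ih]
        by_cases hk : k = n <;> split_ifs <;>
          simp [c, hk, mul_sub, ← mul_assoc, ← map_mul, ha]
    have hsum : ∑ j ∈ Finset.range (m + 1), c (j + 1) * coeff (m - j) (reversion c m ^ (j + 2))
        = c (m + 1) := by
      simp_rw [← coeff_C_mul, habs, coeff_C]
      rw [Finset.sum_eq_single m (fun j hj hjm => if_neg (by simp at hj; omega))
        (by simp), Nat.sub_self, if_pos rfl]
    rw [reversion, hsum, ih]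
    by_cases hm : m + 1 = n
    · rw [if_neg (by omega), if_pos (le_of_eq hm.symm), ← hm]
      simp only [c, if_pos hm, map_neg]
      ring
    · simp only [c, if_neg hm, neg_zero, map_zero, zero_mul, add_zero]
      split_ifs <;> first | rfl | omega

theorem coeff_tLogDeriv_one_sub_sq {a : R} (ha : a * a = 0) {n : ℕ} (hn : n ≠ 0) :
    coeff n (tLogDeriv (1 - C a * X ^ n) ^ 2) = -(2 * n * a) := by
  set e : R⟦X⟧ := C a * X ^ n
  have he : e * e = 0 := by
    rw [show e * e = C (a * a) * X ^ (2 * n) by simp only [e, map_mul]; ring, ha, map_zero,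
      zero_mul]
  have hd : d⁄dX R (X * (1 - e)) = 1 - (n + 1) * e := by
    obtain ⟨k, rfl⟩ := Nat.exists_eq_add_one_of_ne_zero hn
    simp only [e, mul_sub, mul_one, map_sub, derivative_X, Derivation.leibniz,
      Derivation.leibniz_pow, add_tsub_cancel_right, smul_eq_mul, nsmul_eq_mul, Nat.cast_add,
      Nat.cast_one, derivative_C, mul_zero, add_zero, sub_right_inj]
    ring
  have hsq : tLogDeriv (1 - e) ^ 2 = 1 - C (2 * n * a) * X ^ n := by
    rw [tLogDeriv, hd, invOfUnit_one_sub_of_mul_self_eq_zero he (by simp [e, hn])]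
    rw [show C (2 * n * a) * X ^ n = 2 * (n : R⟦X⟧) * e by
      simp only [e, map_mul, map_ofNat, map_natCast]; ring]
    linear_combination
      ((n : R⟦X⟧) ^ 2 - 2 * n - 2 + 2 * n * (n + 1) * e + (n + 1) ^ 2 * e ^ 2) * he
  rw [hsq, map_sub, coeff_one, if_neg hn, coeff_C_mul_X_pow, if_pos rfl, zero_sub]

end

section Graded

open MvPolynomial (IsWeightedHomogeneous isWeightedHomogeneous_zero isWeightedHomogeneous_one)

variable {σ : Type*} (w : σ → ℕ)

section

variable {R : Type*} [CommSemiring R]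

def weightedGraded : Subsemiring (MvPolynomial σ R)⟦X⟧ where
  carrier := {A | ∀ j, (coeff j A).IsWeightedHomogeneous w j}
  mul_mem' {A B} hA hB j := by
    rw [coeff_mul]
    refine IsWeightedHomogeneous.sum _ _ _ fun p hp => ?_
    rw [← Finset.HasAntidiagonal.mem_antidiagonal.1 hp]
    exact (hA p.1).mul (hB p.2)
  one_mem' j := by
    rw [coeff_one]
    split_ifs with hj
    · exact hj ▸ isWeightedHomogeneous_one R w
    · exact isWeightedHomogeneous_zero R w _
  add_mem' hA hB j := by
    rw [map_add]
    exact (hA j).add (hB j)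
  zero_mem' j := by
    rw [map_zero]
    exact isWeightedHomogeneous_zero R w _

variable {w}

theorem derivative_X_mul_mem_weightedGraded {A : (MvPolynomial σ R)⟦X⟧}
    (hA : A ∈ weightedGraded w) : d⁄dX _ (X * A) ∈ weightedGraded w := by
  intro j
  rw [coeff_derivative, coeff_succ_X_mul, mul_comm,
    show (j + 1 : MvPolynomial σ R) = MvPolynomial.C ((j : R) + 1) by simp]
  exact (hA j).C_mul _

end

variable {R : Type*} [CommRing R] {w}

theorem invOfUnit_mem_weightedGraded {A : (MvPolynomial σ R)⟦X⟧} (hA : A ∈ weightedGraded w) :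
    invOfUnit A 1 ∈ weightedGraded w := by
  intro j
  induction j using Nat.strong_induction_on with
  | _ j ih =>
    rw [coeff_invOfUnit, inv_one, Units.val_one, neg_mul, one_mul]
    split_ifs with hj
    · exact hj ▸ isWeightedHomogeneous_one R w
    refine (IsWeightedHomogeneous.sum _ _ _ fun p hp => ?_).neg
    split_ifs with hp₂
    · rw [← Finset.HasAntidiagonal.mem_antidiagonal.1 hp]
      exact (hA p.1).mul (ih p.2 hp₂)
    · exact isWeightedHomogeneous_zero R w _

theorem tLogDeriv_mem_weightedGraded {A : (MvPolynomial σ R)⟦X⟧} (hA : A ∈ weightedGraded w) :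
    tLogDeriv A ∈ weightedGraded w :=
  mul_mem (derivative_X_mul_mem_weightedGraded hA) (invOfUnit_mem_weightedGraded hA)

theorem reversion_mem_weightedGraded {c : ℕ → MvPolynomial σ R}
    (hc : ∀ k, (c k).IsWeightedHomogeneous w k) (m : ℕ) :
    reversion c m ∈ weightedGraded w := by
  induction m with
  | zero => exact one_mem _
  | succ m ih =>
    refine add_mem ih fun j => ?_
    rw [coeff_C_mul_X_pow]
    split_ifs with hj
    · subst hj
      refine (IsWeightedHomogeneous.sum _ _ _ fun i hi => ?_).neg
      have hi : i ≤ m := Nat.lt_succ_iff.1 (Finset.mem_range.1 hi)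
      convert (hc (i + 1)).mul (pow_mem ih (i + 2) (m - i)) using 1
      omega
    · exact isWeightedHomogeneous_zero R w _

end Graded

end PowerSeries

theorem Finsupp.eq_single_one_of_weight_eq {σ : Type*} {w : σ → ℕ} (hw : ∀ j, w j ≠ 0)
    {d : σ →₀ ℕ} {i : σ} (hd : d i ≠ 0) (h : weight w d = w i) : d = single i 1 := by
  have : NonTorsionWeight ℕ w := nonTorsionWeight_of ℕ w hw
  have h0 : weight w (d - single i 1) = 0 := by
    have := weight_sub_single_add (w := w) hd
    omega
  rw [← sub_add_single_one_cancel hd, (weight_eq_zero_iff_eq_zero w).1 h0, zero_add]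

namespace MvPolynomial

variable {σ R : Type*}

open TrivSqZeroExt in
theorem aeval_piSingle_eps [CommSemiring R] [DecidableEq σ] (i : σ) (p : MvPolynomial σ R) :
    aeval (Pi.single i (DualNumber.eps : DualNumber R)) p =
      inl (coeff 0 p) + inr (coeff (Finsupp.single i 1) p) := by
  induction p using MvPolynomial.induction_on with
  | C a => simp [coeff_C, algebraMap_eq_inl, eq_comm (a := (0 : σ →₀ ℕ))]
  | add p q hp hq => simp only [map_add, hp, hq, coeff_add, inl_add, inr_add]; abel
  | mul_X p j hp =>
    rw [map_mul, aeval_X, hp]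
    by_cases hj : j = i
    · subst hj
      ext <;> simp [coeff_mul_X']
    · ext <;> simp [coeff_mul_X', hj]

theorem notMem_vars_sub_coeff_single_smul_X [CommRing R] {w : σ → ℕ} (hw : ∀ j, w j ≠ 0) {i : σ}
    {p : MvPolynomial σ R} (hp : p.IsWeightedHomogeneous w (w i)) :
    i ∉ (p - coeff (Finsupp.single i 1) p • X i).vars := by
  classical
  intro hi
  obtain ⟨d, hd, hid⟩ := (mem_vars_iff_mem_support i).1 hi
  have hX : (coeff (Finsupp.single i 1) p • X i : MvPolynomial σ R).IsWeightedHomogeneous w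
      (w i) := by
    rw [smul_eq_C_mul]
    exact (isWeightedHomogeneous_X R w i).C_mul _
  have hdi := (hp.sub hX) (mem_support_iff.1 hd)
  rw [Finsupp.eq_single_one_of_weight_eq hw (Finsupp.mem_support_iff.1 hid) hdi] at hd
  simp at hd

end MvPolynomial

theorem coeff_succ_psComp_uSeries_X_mul (c : ℕ → ℂ) (W : ℂ⟦X⟧) (N : ℕ) :
    coeff (N + 1) (psComp (uSeries c) (X * W)) =
      coeff N W + ∑ j ∈ Finset.range N, c (j + 1) * coeff (N - 1 - j) (W ^ (j + 2)) := by
  rw [psComp, coeff_mk, Finset.sum_range_succ', Finset.sum_range_succ']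
  simp only [uSeries, coeff_mk, mul_pow, pow_one, zero_add, one_ne_zero, if_false, one_mul,
    if_true, zero_mul, add_zero, coeff_succ_X_mul, add_comm (coeff N W)]
  refine congrArg (· + _) (Finset.sum_congr rfl fun j hj => ?_)
  simp only [Finset.mem_range] at hj
  rw [if_neg (by omega), if_neg (by omega), coeff_X_pow_mul', if_pos (by omega)]
  rw [show j + 1 + 1 - 1 = j + 1 by omega, show N + 1 - (j + 1 + 1) = N - 1 - j by omega]

theorem reversion_eq_trunc {c : ℕ → ℂ} {W : ℂ⟦X⟧} (hW : psComp (uSeries c) (X * W) = X)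
    (m : ℕ) : reversion c m = trunc (m + 1) W := by
  have hcoeff := fun N => congrArg (coeff (N + 1)) hW
  simp only [coeff_succ_psComp_uSeries_X_mul, coeff_X] at hcoeff
  induction m with
  | zero =>
    have h0 := hcoeff 0
    simp only [Finset.range_zero, Finset.sum_empty, add_zero, if_true] at h0
    rw [reversion, trunc_one_left, h0, Polynomial.coe_C, map_one]
  | succ m ih =>
    have hsum : ∀ j ∈ Finset.range (m + 1), c (j + 1) * coeff (m - j) (reversion c m ^ (j + 2))
        = c (j + 1) * coeff (m + 1 - 1 - j) (W ^ (j + 2)) := fun j _ => by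
      rw [ih, coeff_coe_trunc_pow (by omega), Nat.add_sub_cancel]
    have hm := hcoeff (m + 1)
    rw [if_neg (by omega)] at hm
    rw [trunc_succ, Polynomial.coe_add, Polynomial.coe_monomial, ← ih, reversion,
      Finset.sum_congr rfl hsum, monomial_eq_C_mul_X_pow, ← eq_neg_iff_add_eq_zero.2 hm]

theorem Pres_X_mul_eq_coeff_tLogDeriv_sq (n : ℕ) {W : ℂ⟦X⟧} (hW : constantCoeff W = 1) :
    Pres n (X * W) = coeff n (tLogDeriv W ^ 2) := by
  have hinv : (toLS W)⁻¹ = toLS (invOfUnit W 1) := by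
    refine inv_eq_of_mul_eq_one_right ?_
    rw [toLS, toLS, ← map_mul, mul_invOfUnit W 1 (by simp [hW]), map_one]
  have ht : tLS ≠ 0 := by
    rw [tLS, toLS, HahnSeries.ofPowerSeries_X]
    exact HahnSeries.single_ne_zero one_ne_zero
  have hpow : tLS⁻¹ ^ 2 * tLS ^ (1 - (n : ℤ)) = HahnSeries.single (-1 - (n : ℤ)) 1 := by
    rw [RatFunc.single_zpow, ← HahnSeries.ofPowerSeries_X, ← toLS, ← tLS, ← zpow_natCast,
      ← zpow_neg_one, ← zpow_mul, ← zpow_add₀ ht]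
    congr 1
    push_cast
    ring
  have hdiv : toLS (d⁄dX ℂ (X * W)) / toLS (X * W) = toLS (tLogDeriv W) * tLS⁻¹ := by
    rw [show toLS (X * W) = tLS * toLS W from map_mul _ _ _, div_eq_mul_inv, mul_inv, hinv,
      tLogDeriv, toLS, toLS, toLS, map_mul (HahnSeries.ofPowerSeries ℤ ℂ)]
    ring
  have hres := HahnSeries.coeff_mul_single_add (r := (1 : ℂ)) (a := (n : ℤ)) (b := -1 - n)
    (x := HahnSeries.ofPowerSeries ℤ ℂ (tLogDeriv W ^ 2))
  rw [add_sub_cancel] at hres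
  rw [show Pres n (X * W) = ((toLS (d⁄dX ℂ (X * W)) / toLS (X * W)) ^ 2 *
      tLS ^ (1 - (n : ℤ))).coeff (-1) from rfl, hdiv, mul_pow, mul_assoc, hpow, toLS, ← map_pow,
    hres, mul_one, HahnSeries.ofPowerSeries_apply_coeff]

section Universal

open MvPolynomial (aeval)

/-- `u_k` as an element of `ℤ[u₁, …, uₙ]`, whose variable `j : Fin n` is `u_{j+1}`. -/
def uVar (n k : ℕ) : MvPolynomial (Fin n) ℤ :=
  if h : 0 < k ∧ k ≤ n then MvPolynomial.X ⟨k - 1, by omega⟩ else 0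

def universalP (n : ℕ) : MvPolynomial (Fin n) ℤ :=
  coeff n (tLogDeriv (reversion (uVar n) n) ^ 2)

theorem isWeightedHomogeneous_uVar (n k : ℕ) :
    (uVar n k).IsWeightedHomogeneous (fun j : Fin n => (j : ℕ) + 1) k := by
  unfold uVar
  split_ifs with h
  · convert MvPolynomial.isWeightedHomogeneous_X ℤ _ _
    simp only
    omega
  · exact MvPolynomial.isWeightedHomogeneous_zero ℤ _ k

theorem isWeightedHomogeneous_universalP (n : ℕ) :
    (universalP n).IsWeightedHomogeneous (fun j : Fin n => (j : ℕ) + 1) n :=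
  pow_mem (tLogDeriv_mem_weightedGraded
    (reversion_mem_weightedGraded (isWeightedHomogeneous_uVar n) n)) 2 n

theorem aeval_universalP {S : Type*} [CommRing S] [Algebra ℤ S] (n : ℕ) (c : ℕ → S) :
    aeval (fun j : Fin n => c ((j : ℕ) + 1)) (universalP n) =
      coeff n (tLogDeriv (reversion c n) ^ 2) := by
  set f := (aeval (R := ℤ) (fun j : Fin n => c ((j : ℕ) + 1))).toRingHom
  have hc : ∀ k, 0 < k → k ≤ n → (f ∘ uVar n) k = c k := fun k hk hkn => by
    simp [f, uVar, hk, hkn, Nat.sub_add_cancel hk]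
  change f (coeff n _) = _
  rw [← coeff_map f, map_pow, map_tLogDeriv f (constantCoeff_reversion _ _), map_reversion,
    reversion_congr hc]

theorem Pres_eq_aeval_universalP (n : ℕ) (c : ℕ → ℂ) {U : ℂ⟦X⟧} (hU0 : constantCoeff U = 0)
    (hU : psComp (uSeries c) U = X) :
    Pres n U = aeval (fun j : Fin n => c ((j : ℕ) + 1)) (universalP n) := by
  set W : ℂ⟦X⟧ := mk fun k => coeff (k + 1) U
  have hUW : U = X * W := by rw [← sub_const_eq_X_mul_shift, hU0, map_zero, sub_zero]
  rw [hUW] at hU ⊢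
  have hW1 : constantCoeff W = 1 := by
    have h0 := congrArg (coeff 0) (reversion_eq_trunc hU 0)
    rwa [zero_add, coeff_coe_trunc_of_lt zero_lt_one, reversion, coeff_one, if_pos rfl, eq_comm,
      coeff_zero_eq_constantCoeff_apply] at h0
  rw [Pres_X_mul_eq_coeff_tLogDeriv_sq n hW1, aeval_universalP,
    coeff_tLogDeriv_sq_eq_of_trunc_eq hW1 (constantCoeff_reversion c n)
      (by rw [reversion_eq_trunc hU n, trunc_trunc])]

theorem coeff_single_universalP {n : ℕ} (hn : 1 ≤ n) :
    MvPolynomial.coeff (Finsupp.single ⟨n - 1, Nat.sub_lt hn one_pos⟩ 1) (universalP n) =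
      -(2 * n) := by
  set c : ℕ → DualNumber ℤ := fun k => if k = n then DualNumber.eps else 0
  have hε : Pi.single (⟨n - 1, Nat.sub_lt hn one_pos⟩ : Fin n) (DualNumber.eps : DualNumber ℤ) =
      fun j : Fin n => c ((j : ℕ) + 1) := by
    funext j
    simp only [Pi.single_apply, Fin.ext_iff, c]
    split_ifs <;> first | rfl | omega
  have := congrArg TrivSqZeroExt.snd
    (MvPolynomial.aeval_piSingle_eps (⟨n - 1, Nat.sub_lt hn one_pos⟩ : Fin n) (universalP n))
  rw [hε, aeval_universalP, reversion_ite_of_mul_self_eq_zero DualNumber.eps_mul_eps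
    (by omega : n ≠ 0), if_pos le_rfl, coeff_tLogDeriv_one_sub_sq DualNumber.eps_mul_eps
    (by omega : n ≠ 0)] at this
  have h2 : TrivSqZeroExt.fst (2 : DualNumber ℤ) = 2 := rfl
  simpa [eq_comm, h2] using this

end Universal

/-- **(Proposition 3.4, properties of `P_n`.)**  For each `n ≥ 1` there is a polynomial
`Q` with integer coefficients in `u_1, …, u_n` (variable `j : Fin n` standing for
`u_{j+1}`), weighted homogeneous of degree `n` when `u_j` has degree `j`, of the form
`Q = -2n·u_n + (terms involving only u_1, …, u_{n-1})`, such that for every coefficient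
sequence `c` and every compositional inverse `U` of `u(z) = z(1 + Σ c_n zⁿ)` one has
`P_n(u) = Q(u_1, …, u_n)`. -/
theorem Pn_is_integer_polynomial (n : ℕ) (hn : 1 ≤ n) :
    ∃ Q : MvPolynomial (Fin n) ℤ,
      Q.IsWeightedHomogeneous (fun j : Fin n => (j : ℕ) + 1) n ∧
      (∃ Q' : MvPolynomial (Fin n) ℤ,
        (⟨n - 1, Nat.sub_lt hn one_pos⟩ : Fin n) ∉ Q'.vars ∧
        Q = (-(2 * (n : ℤ))) • MvPolynomial.X ⟨n - 1, Nat.sub_lt hn one_pos⟩ + Q') ∧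
      ∀ (c : ℕ → ℂ) (U : PowerSeries ℂ),
        PowerSeries.constantCoeff U = 0 →
        psComp (uSeries c) U = PowerSeries.X →
        Pres n U = MvPolynomial.aeval (fun j : Fin n => c ((j : ℕ) + 1)) Q := by
  have hhom := isWeightedHomogeneous_universalP n
  have hhom' : (universalP n).IsWeightedHomogeneous (fun j : Fin n => (j : ℕ) + 1)
      (n - 1 + 1) := by
    rwa [Nat.sub_add_cancel hn]
  refine ⟨universalP n, hhom, ⟨_, MvPolynomial.notMem_vars_sub_coeff_single_smul_X
    (fun _ => Nat.add_one_ne_zero _) hhom', ?_⟩,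
    fun c U hU0 hU => Pres_eq_aeval_universalP n c hU0 hU⟩
  rw [coeff_single_universalP hn, add_sub_cancel]

end
end

section
/- For β > 0, the function F(x) = exp(-β/x) for x > 0 (and F(x) = 0 for x ≤ 0) is a cumulative distribution function, and its Laplace-type transform satisfies ∫_0^∞ e^{-λx} dF(x) = 2√(λβ) · K₁(2√(λβ)) for all λ > 0, where K₁ is the modified Bessel function of the second kind of order 1. -/
/-!
`F(x) = exp(-β/x)` is the flat smooth function `expNegInvGlue` rescaled by `β`, so it is
differentiable everywhere with derivative the inverse gamma density `(β/x²) e^{-β/x}` (and `0`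
on `x ≤ 0`). By the fundamental theorem of calculus on each interval `(a, b]`, the Stieltjes
measure of a differentiable Stieltjes function is Lebesgue measure with its derivative as density.
The transform is then `β ∫₀^∞ x⁻² e^{-λx - β/x} dx`, and the substitution `t = λx` turns this
into the integral defining `2√(λβ) K₁(2√(λβ))`.
-/

open MeasureTheory Filter

noncomputable section

/-- The modified Bessel function of the second kind of order 1, via the integral
representation `K₁(z) = (z/4)∫₀^∞ t⁻² exp(-t - z²/(4t)) dt`. -/
def besselK1 (z : ℝ) : ℝ :=
  (z / 4) * ∫ t in Set.Ioi (0 : ℝ), t ^ (-2 : ℝ) * Real.exp (-t - z ^ 2 / (4 * t))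

open Set Real

theorem StieltjesFunction.measure_eq_withDensity_of_hasDerivAt (f : StieltjesFunction ℝ)
    {f' : ℝ → ℝ} (hf : ∀ x, HasDerivAt f (f' x) x) :
    f.measure = volume.withDensity fun x => ENNReal.ofReal (f' x) := by
  have hf'_nonneg : ∀ x, 0 ≤ f' x := fun x => (hf x).deriv ▸ f.mono.deriv_nonneg
  refine Measure.ext_of_Ioc _ _ fun a b hab => ?_
  have hint : IntegrableOn f' (Ioc a b) :=
    intervalIntegral.integrableOn_deriv_of_nonneg
      (HasDerivAt.continuousOn fun x _ => hf x) (fun x _ => hf x) fun x _ => hf'_nonneg x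
  rw [f.measure_Ioc, withDensity_apply _ measurableSet_Ioc,
    ← ofReal_integral_eq_lintegral_ofReal hint (ae_of_all _ hf'_nonneg),
    ← intervalIntegral.integral_of_le hab.le,
    intervalIntegral.integral_eq_sub_of_hasDerivAt (fun x _ => hf x)
      (intervalIntegrable_iff_integrableOn_Ioc_of_le hab.le |>.mpr hint)]

theorem two_mul_sqrt_mul_besselK1 {a b : ℝ} (ha : 0 < a) (hb : 0 ≤ b) :
    2 * √(a * b) * besselK1 (2 * √(a * b))
      = b * ∫ x in Ioi 0, (x ^ 2)⁻¹ * exp (-a * x - b / x) := by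
  have hsq : (2 * √(a * b)) ^ 2 = 4 * (a * b) := by
    rw [mul_pow, sq_sqrt (by positivity)]; norm_num
  have hintegrand : ∫ t in Ioi 0, t ^ (-2 : ℝ) * exp (-t - (2 * √(a * b)) ^ 2 / (4 * t))
      = ∫ t in Ioi 0, (t ^ 2)⁻¹ * exp (-t - a * b / t) := by
    refine setIntegral_congr_fun measurableSet_Ioi fun t ht => ?_
    rw [hsq, rpow_neg (le_of_lt ht), rpow_two, mul_div_mul_left _ _ four_ne_zero]
  have hrescaled : ∫ x in Ioi 0, ((a * x) ^ 2)⁻¹ * exp (-(a * x) - a * b / (a * x))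
      = (a ^ 2)⁻¹ * ∫ x in Ioi 0, (x ^ 2)⁻¹ * exp (-a * x - b / x) := by
    rw [← integral_const_mul]
    refine setIntegral_congr_fun measurableSet_Ioi fun x _ => ?_
    rw [mul_div_mul_left _ _ ha.ne', mul_pow, mul_inv, neg_mul, mul_assoc]
  -- the substitution `t = a x`
  have hscale := integral_comp_mul_left_Ioi' (fun t => (t ^ 2)⁻¹ * exp (-t - a * b / t)) 0 ha
  rw [mul_zero, hrescaled, smul_eq_mul] at hscale
  have hprod : 2 * √(a * b) * (2 * √(a * b) / 4) = a * b := by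
    rw [mul_div_assoc', ← pow_two, hsq]; ring
  rw [besselK1, hintegrand, ← hscale, ← mul_assoc, hprod]
  field_simp

section InverseGamma

variable {β : ℝ}

def invGammaCDF (β x : ℝ) : ℝ := if 0 < x then exp (-β / x) else 0

def invGammaPDF (β x : ℝ) : ℝ := β / x ^ 2 * invGammaCDF β x

def invGammaMeasure (β : ℝ) : Measure ℝ :=
  volume.withDensity fun x => ENNReal.ofReal (invGammaPDF β x)

theorem invGammaCDF_eq_expNegInvGlue (hβ : 0 < β) (x : ℝ) :
    invGammaCDF β x = expNegInvGlue (x / β) := by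
  rcases le_or_gt x 0 with hx | hx
  · simp [invGammaCDF, hx.not_gt,
      expNegInvGlue.zero_of_nonpos (div_nonpos_of_nonpos_of_nonneg hx hβ.le)]
  · simp [invGammaCDF, expNegInvGlue, hx, (div_pos hx hβ).not_ge, neg_div]

@[fun_prop]
theorem measurable_invGammaCDF : Measurable (invGammaCDF β) :=
  Measurable.ite measurableSet_Ioi (measurable_const.div measurable_id).exp measurable_const

theorem monotone_invGammaCDF (hβ : 0 < β) : Monotone (invGammaCDF β) := by
  intro x y hxy
  simp only [invGammaCDF_eq_expNegInvGlue hβ]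
  exact expNegInvGlue.monotone (div_le_div_of_nonneg_right hxy hβ.le)

theorem hasDerivAt_invGammaCDF (hβ : 0 < β) (x : ℝ) :
    HasDerivAt (invGammaCDF β) (invGammaPDF β x) x := by
  have hglue := (expNegInvGlue.hasDerivAt_polynomial_eval_inv_mul 1 (x / β)).comp x
    ((hasDerivAt_id x).div_const β)
  simp only [Polynomial.eval_one, one_mul, Polynomial.derivative_one, sub_zero, mul_one,
    Polynomial.eval_pow, Polynomial.eval_X] at hglue
  rw [show invGammaCDF β = _ from funext (invGammaCDF_eq_expNegInvGlue hβ)]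
  refine hglue.congr_deriv ?_
  rw [invGammaPDF, invGammaCDF_eq_expNegInvGlue hβ, inv_div]
  field_simp

theorem continuous_invGammaCDF (hβ : 0 < β) : Continuous (invGammaCDF β) :=
  continuous_iff_continuousAt.2 fun x => (hasDerivAt_invGammaCDF hβ x).continuousAt

theorem tendsto_invGammaCDF_atBot : Tendsto (invGammaCDF β) atBot (nhds 0) :=
  tendsto_const_nhds.congr' <| (eventually_le_atBot 0).mono fun x hx => by
    simp [invGammaCDF, hx.not_gt]

theorem tendsto_invGammaCDF_atTop : Tendsto (invGammaCDF β) atTop (nhds 1) := by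
  have hexp : Tendsto (fun x => exp (-β / x)) atTop (nhds 1) := by
    simpa [Function.comp_def] using
      (continuous_exp.tendsto 0).comp (tendsto_const_nhds.div_atTop tendsto_id)
  exact hexp.congr' <| (eventually_gt_atTop 0).mono fun x hx => by simp [invGammaCDF, hx]

theorem integral_invGammaMeasure (hβ : 0 ≤ β) (g : ℝ → ℝ) :
    ∫ x, g x ∂invGammaMeasure β = ∫ x in Ioi 0, β / x ^ 2 * exp (-β / x) * g x := by
  rw [invGammaMeasure, integral_withDensity_eq_integral_toReal_smul
    (by unfold invGammaPDF; fun_prop) (ae_of_all _ fun _ => ENNReal.ofReal_lt_top),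
    ← integral_indicator measurableSet_Ioi]
  congr 1 with x
  by_cases hx : 0 < x
  · have hpdf : invGammaPDF β x = β / x ^ 2 * exp (-β / x) := by
      simp [invGammaPDF, invGammaCDF, hx]
    rw [indicator_of_mem (mem_Ioi.2 hx), hpdf, ENNReal.toReal_ofReal (by positivity), smul_eq_mul]
  · simp [invGammaPDF, invGammaCDF, hx]

theorem integral_exp_neg_mul_invGammaMeasure (hβ : 0 ≤ β) {lam : ℝ} (hlam : 0 < lam) :
    ∫ x, exp (-lam * x) ∂invGammaMeasure β
      = 2 * √(lam * β) * besselK1 (2 * √(lam * β)) := by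
  rw [integral_invGammaMeasure hβ, two_mul_sqrt_mul_besselK1 hlam hβ, ← integral_const_mul]
  refine setIntegral_congr_fun measurableSet_Ioi fun x _ => ?_
  rw [sub_eq_add_neg, exp_add, neg_div]
  ring

theorem StieltjesFunction.measure_eq_invGammaMeasure (hβ : 0 < β) (S : StieltjesFunction ℝ)
    (hS : ∀ x, S x = invGammaCDF β x) : S.measure = invGammaMeasure β := by
  have hSF : ⇑S = invGammaCDF β := funext hS
  exact S.measure_eq_withDensity_of_hasDerivAt fun x => hSF ▸ hasDerivAt_invGammaCDF hβ x

end InverseGamma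

/-- **(Diagonal distribution conjecture, analytic part.)**  For `β > 0` the function
`F(x) = exp(-β/x)` for `x > 0` (and `0` for `x ≤ 0`) is a cumulative distribution
function, and its Laplace–Stieltjes transform satisfies
`∫₀^∞ e^{-λx} dF(x) = 2√(λβ) K₁(2√(λβ))` for all `λ > 0`. -/
theorem inverse_gamma_cdf_laplace_transform
    (β : ℝ) (hβ : 0 < β) (F : ℝ → ℝ)
    (hF : ∀ x : ℝ, F x = if 0 < x then Real.exp (-β / x) else 0) :
    Monotone F ∧
    (∀ x : ℝ, ContinuousWithinAt F (Set.Ici x) x) ∧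
    Tendsto F atBot (nhds 0) ∧
    Tendsto F atTop (nhds 1) ∧
    ∀ S : StieltjesFunction ℝ, (∀ x, S x = F x) →
      ∀ lam : ℝ, 0 < lam →
        ∫ x, Real.exp (-lam * x) ∂S.measure
          = 2 * Real.sqrt (lam * β) * besselK1 (2 * Real.sqrt (lam * β)) := by
  obtain rfl : F = invGammaCDF β := funext hF
  refine ⟨monotone_invGammaCDF hβ, fun x => (continuous_invGammaCDF hβ).continuousWithinAt,
    tendsto_invGammaCDF_atBot, tendsto_invGammaCDF_atTop, fun S hS lam hlam => ?_⟩
  rw [S.measure_eq_invGammaMeasure hβ hS, integral_exp_neg_mul_invGammaMeasure hβ.le hlam]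

end
end
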